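/- arXiv:0904.0621 — 2 statements merged into one kernel-verified Lean document; each statement's English description precedes it below -/
import Mathlib

section
/- Let k, l, L be positive real numbers and let q be a real number such that kl < |2πm − q| for every integer m (for |q| ≤ π and kl < π this holds precisely when kl < |q|). Then every s_m(q) is a positive real number, every term exp(−(L/l)·s_m(q))/s_m(q) is a positive real number, and consequently 𝒦(q) is purely imaginary with strictly positive imaginary part; in particular 𝒦(q) ≠ 0. -/
open scoped Real

/-- The branch of the square root `s_m(q) = √((2πm − q)² − k²l²)`, with
`√(−1) = +i`: the nonnegative real root when `(2πm − q)² ≥ k²l²`, and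
`i·√(k²l² − (2πm − q)²)` otherwise. -/
noncomputable def sBranch (k l : ℝ) (q : ℝ) (m : ℤ) : ℂ :=
  if k ^ 2 * l ^ 2 ≤ (2 * Real.pi * (m : ℝ) - q) ^ 2 then
    (Real.sqrt ((2 * Real.pi * (m : ℝ) - q) ^ 2 - k ^ 2 * l ^ 2) : ℂ)
  else
    Complex.I * (Real.sqrt (k ^ 2 * l ^ 2 - (2 * Real.pi * (m : ℝ) - q) ^ 2) : ℂ)

/-- The `m`-th term of the interference kernel series. -/
noncomputable def kernelTerm (k l L : ℝ) (q : ℝ) (m : ℤ) : ℂ :=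
  Complex.exp (-((L : ℂ) / (l : ℂ)) * sBranch k l q m) / sBranch k l q m

/-- The interference kernel `𝒦(q) = 2i·Σ_{m∈ℤ} exp(−(L/l)·s_m(q))/s_m(q)`. -/
noncomputable def kernelK (k l L : ℝ) (q : ℝ) : ℂ :=
  2 * Complex.I * ∑' m : ℤ, kernelTerm k l L q m

theorem aux_sum (c : ℝ) (hc : 0 < c) (u : ℕ → ℝ) (hu : ∀ n, 0 ≤ u n) (N : ℕ)
    (h : ∀ n, N ≤ n → u n ≤ Real.exp (-(c * n))) : Summable u := by
  have hg : Summable fun n : ℕ => Real.exp (-c) ^ n :=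
    summable_geometric_of_lt_one (Real.exp_nonneg _) (Real.exp_lt_one_iff.2 (by linarith))
  rw [← summable_nat_add_iff N]
  apply Summable.of_nonneg_of_le (fun n => hu _) (fun n => ?_) hg
  calc u (n + N) ≤ Real.exp (-(c * ((n + N : ℕ) : ℝ))) := h _ (by omega)
    _ ≤ Real.exp (-(c * n)) := by
        apply Real.exp_le_exp.2; push_cast; nlinarith [Nat.cast_nonneg (α := ℝ) N]
    _ = Real.exp (-c) ^ n := by rw [← Real.exp_nat_mul]; ring_nf

/-- If `kl < |2πm − q|` for every integer `m`, then every `s_m(q)` is a positive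
real number, every term of the kernel series is a positive real number, and
`𝒦(q)` is purely imaginary with strictly positive imaginary part; in
particular `𝒦(q) ≠ 0`. -/
theorem kernel_purely_imaginary (k l L : ℝ) (hk : 0 < k) (hl : 0 < l) (hL : 0 < L)
    (q : ℝ) (hq : ∀ m : ℤ, k * l < |2 * Real.pi * (m : ℝ) - q|) :
    (∀ m : ℤ, 0 < (sBranch k l q m).re ∧ (sBranch k l q m).im = 0) ∧
    (∀ m : ℤ, 0 < (kernelTerm k l L q m).re ∧ (kernelTerm k l L q m).im = 0) ∧
    (kernelK k l L q).re = 0 ∧ 0 < (kernelK k l L q).im ∧ kernelK k l L q ≠ 0 := by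
  set c : ℝ := L / l with hcdef
  have hc : 0 < c := div_pos hL hl
  set s : ℤ → ℝ := fun m => Real.sqrt ((2 * Real.pi * (m : ℝ) - q) ^ 2 - k ^ 2 * l ^ 2)
    with hsdef
  have hkl : 0 < k * l := mul_pos hk hl
  have hlt : ∀ m : ℤ, k ^ 2 * l ^ 2 < (2 * Real.pi * (m : ℝ) - q) ^ 2 := by
    intro m
    have h := hq m
    have := abs_nonneg (2 * Real.pi * (m : ℝ) - q)
    nlinarith [sq_abs (2 * Real.pi * (m : ℝ) - q)]
  have hsB : ∀ m : ℤ, sBranch k l q m = ((s m : ℝ) : ℂ) := by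
    intro m
    simp [sBranch, (hlt m).le, hsdef]
  have hspos : ∀ m : ℤ, 0 < s m := fun m => Real.sqrt_pos.2 (by linarith [hlt m])
  set f : ℤ → ℝ := fun m => Real.exp (-(c * s m)) / s m with hfdef
  have hterm : ∀ m : ℤ, kernelTerm k l L q m = ((f m : ℝ) : ℂ) := by
    intro m
    rw [kernelTerm, hsB m]
    have h2 : -((L : ℂ) / (l : ℂ)) * ((s m : ℝ) : ℂ) = ((-(c * s m) : ℝ) : ℂ) := by
      rw [hcdef]; push_cast; ring
    rw [h2, ← Complex.ofReal_exp, ← Complex.ofReal_div]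
  have hfpos : ∀ m : ℤ, 0 < f m := fun m =>
    div_pos (Real.exp_pos _) (hspos m)
  -- key decay estimate
  have hkey : ∀ m : ℤ, |q| + k * l + 1 ≤ |(m : ℝ)| → f m ≤ Real.exp (-(c * |(m : ℝ)|)) := by
    intro m hm
    set a : ℝ := |(m : ℝ)| with hadef
    have ha1 : 1 ≤ a := by
      have := abs_nonneg q
      nlinarith
    have haq : |q| ≤ a := by nlinarith
    have hakl : k * l ≤ a := by
      have := abs_nonneg q; nlinarith
    have hx : 5 * a ≤ |2 * Real.pi * (m : ℝ) - q| := by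
      have h1 : |2 * Real.pi * (m : ℝ)| - |q| ≤ |2 * Real.pi * (m : ℝ) - q| :=
        abs_sub_abs_le_abs_sub _ _
      have h2 : |2 * Real.pi * (m : ℝ)| = 2 * Real.pi * a := by
        rw [abs_mul, abs_of_pos (by positivity : (0:ℝ) < 2 * Real.pi)]
      nlinarith [Real.pi_gt_three]
    have hsa : a ≤ s m := by
      rw [hsdef]
      rw [show (fun m => Real.sqrt ((2 * Real.pi * (m : ℝ) - q) ^ 2 - k ^ 2 * l ^ 2)) m
        = Real.sqrt ((2 * Real.pi * (m : ℝ) - q) ^ 2 - k ^ 2 * l ^ 2) from rfl]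
      rw [show a = Real.sqrt (a ^ 2) from (Real.sqrt_sq (by linarith)).symm]
      apply Real.sqrt_le_sqrt
      nlinarith [sq_abs (2 * Real.pi * (m : ℝ) - q), abs_nonneg (2 * Real.pi * (m : ℝ) - q)]
    have hs1 : 1 ≤ s m := le_trans ha1 hsa
    calc f m ≤ Real.exp (-(c * s m)) := by
          rw [hfdef]
          exact div_le_self (Real.exp_pos _).le hs1
      _ ≤ Real.exp (-(c * a)) := by
          apply Real.exp_le_exp.2
          nlinarith
  have hN : ∃ N : ℕ, |q| + k * l + 1 ≤ (N : ℝ) := exists_nat_ge _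
  obtain ⟨N, hNle⟩ := hN
  have hsumf : Summable f := by
    apply Summable.of_nat_of_neg
    · apply aux_sum c hc _ (fun n => (hfpos _).le) N
      intro n hn
      have h1 : |((n : ℤ) : ℝ)| = (n : ℝ) := by
        rw [Int.cast_natCast, abs_of_nonneg (Nat.cast_nonneg n)]
      have := hkey (n : ℤ) (by rw [h1]; exact le_trans hNle (by exact_mod_cast hn))
      rwa [h1] at this
    · apply aux_sum c hc _ (fun n => (hfpos _).le) N
      intro n hn
      have h := hkey (-(n : ℤ)) ?_
      · simpa [abs_of_nonneg (Nat.cast_nonneg (α := ℝ) n)] using h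
      · simp only [Int.cast_neg, Int.cast_natCast, abs_neg,
          abs_of_nonneg (Nat.cast_nonneg (α := ℝ) n)]
        exact le_trans hNle (by exact_mod_cast hn)
  have htpos : 0 < ∑' m : ℤ, f m :=
    Summable.tsum_pos hsumf (fun m => (hfpos m).le) 0 (hfpos 0)
  have hK : kernelK k l L q = 2 * Complex.I * (((∑' m : ℤ, f m : ℝ) : ℂ)) := by
    rw [kernelK, Complex.ofReal_tsum]
    exact congrArg _ (tsum_congr hterm)
  refine ⟨fun m => ?_, fun m => ?_, ?_, ?_, ?_⟩
  · rw [hsB m]; exact ⟨by simpa using hspos m, by simp⟩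
  · rw [hterm m]; exact ⟨by simpa using hfpos m, by simp⟩
  · rw [hK]; simp [Complex.mul_re]
  · rw [hK]; simpa using htpos
  · rw [hK]
    intro h
    have h2 : ((∑' m : ℤ, f m : ℝ) : ℂ) = 0 := by
      have hI : (2 : ℂ) * Complex.I ≠ 0 := by simp [Complex.I_ne_zero]
      exact (mul_eq_zero.1 h).resolve_left hI
    rw [Complex.ofReal_eq_zero] at h2
    exact absurd h2 (ne_of_gt htpos)
end

section
/- (Sampling theorem for arrays of discrete sources, abstract form.) Let G : ℝ × ℝ → ℂ be a radiation kernel with G(−y, z) = G(y, z) for all y, z, let l > 0 and L > 0, and set H_n = G(nl, L) for n ∈ ℤ. Assume H is bounded, Ψ : ℤ → ℂ satisfies Σ_{n∈ℤ} |Ψ_n| < ∞ together with the biorthogonality relation Σ_{n∈ℤ} Ψ_n·H_{n−m} = δ_{m0} for every integer m. Let E : ℤ → ℂ with Σ_{m∈ℤ} |E_m| < ∞ and define the currents I_n = Σ_{m∈ℤ} E_m·Ψ_{n−m} (absolutely convergent for each n). Fix a point (y, z) ∈ ℝ² such that the sequence n ↦ G(y − nl, z) is bounded, and define the field F(y, z)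 = Σ_{n∈ℤ} I_n·G(y − nl, z) (absolutely convergent). Then: (a) F(ml, L) = E_m for every integer m; and (b) the field is completely determined by its samples in the image plane: F(y, z) = Σ_{m∈ℤ} F(ml, L) · ( Σ_{n∈ℤ} Ψ_{n−m}·G(y − nl, z) ), where the inner series converges absolutely for each m and the outer series converges absolutely. -/
open Function

set_option maxHeartbeats 1000000

/-- The norm-product `(m,n) ↦ ‖A m‖ ‖B (n-m)‖ C` is summable on `ℤ × ℤ`. -/
lemma shear_norm_summable {A B : ℤ → ℂ} (hA : Summable fun m : ℤ => ‖A m‖)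
    (hB : Summable fun n : ℤ => ‖B n‖) (C : ℝ) :
    Summable fun p : ℤ × ℤ => ‖A p.1‖ * ‖B (p.2 - p.1)‖ * C := by
  have h1 : Summable fun p : ℤ × ℤ => ‖A p.1‖ * ‖B p.2‖ :=
    hA.mul_of_nonneg hB (fun _ => norm_nonneg _) (fun _ => norm_nonneg _)
  have h2 : Summable fun p : ℤ × ℤ => ‖A p.1‖ * ‖B p.2‖ * C := h1.mul_right C
  have h3 := h2.comp_injective
    ((Equiv.refl ℤ).prodShear (fun m => Equiv.subRight m)).injective
  simpa [Function.comp_def, Equiv.prodShear] using h3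

/-- Shear-summability of `(m,n) ↦ A m * B (n-m) * u n` for a bounded `u`. -/
lemma shear_summable {A B : ℤ → ℂ} (hA : Summable fun m : ℤ => ‖A m‖)
    (hB : Summable fun n : ℤ => ‖B n‖) {u : ℤ → ℂ} {C : ℝ}
    (hu : ∀ n : ℤ, ‖u n‖ ≤ C) :
    Summable (Function.uncurry fun m n : ℤ => A m * B (n - m) * u n) := by
  apply Summable.of_norm
  apply (shear_norm_summable hA hB C).of_nonneg_of_le (fun _ => norm_nonneg _)
  intro p
  simp only [uncurry, norm_mul]
  exact mul_le_mul_of_nonneg_left (hu p.2) (by positivity)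

/-- Sampling theorem for arrays of discrete sources, abstract form: the field
`F(y, z) = Σ_n I_n G(y − nl, z)` produced by the currents
`I_n = Σ_m E_m Ψ_{n−m}` takes the prescribed values `E_m` at the image-plane
sample points `(ml, L)` and is completely determined by those samples via the
wavelet expansion
`F(y, z) = Σ_m F(ml, L) (Σ_n Ψ_{n−m} G(y − nl, z))`. -/
theorem sampling_theorem (G : ℝ × ℝ → ℂ)
    (hGsym : ∀ y z : ℝ, G (-y, z) = G (y, z))
    (l L : ℝ) (hl : 0 < l) (hL : 0 < L)
    (H : ℤ → ℂ) (hH : ∀ n : ℤ, H n = G ((n : ℝ) * l, L))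
    (hHb : ∃ C : ℝ, ∀ n : ℤ, ‖H n‖ ≤ C)
    (Ψ : ℤ → ℂ) (hΨ : Summable fun n : ℤ => ‖Ψ n‖)
    (hbi : ∀ m : ℤ, ∑' n : ℤ, Ψ n * H (n - m) = if m = 0 then 1 else 0)
    (E : ℤ → ℂ) (hE : Summable fun m : ℤ => ‖E m‖)
    (I : ℤ → ℂ) (hI : ∀ n : ℤ, I n = ∑' m : ℤ, E m * Ψ (n - m))
    (y z : ℝ) (hGb : ∃ C : ℝ, ∀ n : ℤ, ‖G (y - (n : ℝ) * l, z)‖ ≤ C)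
    (F : ℝ → ℝ → ℂ)
    (hF : ∀ y' z' : ℝ, F y' z' = ∑' n : ℤ, I n * G (y' - (n : ℝ) * l, z')) :
    -- the defining series for the currents and the field converge absolutely
    (∀ n : ℤ, Summable fun m : ℤ => ‖E m * Ψ (n - m)‖) ∧
    (Summable fun n : ℤ => ‖I n * G (y - (n : ℝ) * l, z)‖) ∧
    -- (a) the field takes the prescribed values at the image-plane samples
    (∀ m : ℤ, F ((m : ℝ) * l) L = E m) ∧
    -- (b) the field is completely determined by its image-plane samples
    (∀ m : ℤ, Summable fun n : ℤ => ‖Ψ (n - m) * G (y - (n : ℝ) * l, z)‖) ∧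
    (Summable fun m : ℤ =>
      ‖F ((m : ℝ) * l) L * ∑' n : ℤ, Ψ (n - m) * G (y - (n : ℝ) * l, z)‖) ∧
    F y z = ∑' m : ℤ, F ((m : ℝ) * l) L *
      ∑' n : ℤ, Ψ (n - m) * G (y - (n : ℝ) * l, z) := by
  obtain ⟨D, hD⟩ := hHb
  obtain ⟨C, hC⟩ := hGb
  set g : ℤ → ℂ := fun n => G (y - (n : ℝ) * l, z) with hg
  have hC0 : (0:ℝ) ≤ C := le_trans (norm_nonneg _) (hC 0)
  -- bound for Ψ
  have hΨbd : ∀ k : ℤ, ‖Ψ k‖ ≤ ∑' n : ℤ, ‖Ψ n‖ := fun k =>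
    Summable.le_tsum hΨ k (fun _ _ => norm_nonneg _)
  -- shifted summability of Ψ-norms
  have hΨs : ∀ m : ℤ, Summable fun n : ℤ => ‖Ψ (n - m)‖ := fun m =>
    (Equiv.subRight m).summable_iff.2 hΨ
  -- (1) currents' series converge absolutely
  have h1 : ∀ n : ℤ, Summable fun m : ℤ => ‖E m * Ψ (n - m)‖ := by
    intro n
    apply Summable.of_nonneg_of_le (fun _ => norm_nonneg _)
      (fun m => ?_) (hE.mul_right (∑' k : ℤ, ‖Ψ k‖))
    rw [norm_mul]
    exact mul_le_mul_of_nonneg_left (hΨbd _) (norm_nonneg _)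
  -- norm bound for I
  have hIb : ∀ n : ℤ, ‖I n‖ ≤ ∑' m : ℤ, ‖E m‖ * ‖Ψ (n - m)‖ := by
    intro n
    rw [hI n]
    refine le_trans (norm_tsum_le_tsum_norm (h1 n)) (le_of_eq ?_)
    exact tsum_congr fun m => norm_mul _ _
  -- the big summable product with constant C, swapped to (n,m) order
  have hQ : Summable fun p : ℤ × ℤ => ‖E p.1‖ * ‖Ψ (p.2 - p.1)‖ * C :=
    shear_norm_summable hE hΨ C
  have hQs : Summable fun p : ℤ × ℤ => ‖E p.2‖ * ‖Ψ (p.1 - p.2)‖ * C := hQ.prod_symm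
  have hQnn : (0 : ℤ × ℤ → ℝ) ≤ fun p : ℤ × ℤ => ‖E p.2‖ * ‖Ψ (p.1 - p.2)‖ * C :=
    fun p => by positivity
  have hQ2 := (summable_prod_of_nonneg hQnn).1 hQs
  -- (2) the field series converges absolutely
  have h2 : Summable fun n : ℤ => ‖I n * g n‖ := by
    apply Summable.of_nonneg_of_le (fun _ => norm_nonneg _) (fun n => ?_) hQ2.2
    calc ‖I n * g n‖ = ‖I n‖ * ‖g n‖ := norm_mul _ _
      _ ≤ (∑' m : ℤ, ‖E m‖ * ‖Ψ (n - m)‖) * C := by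
          apply mul_le_mul (hIb n) (hC n) (norm_nonneg _)
          exact tsum_nonneg fun m => by positivity
      _ = ∑' m : ℤ, ‖E m‖ * ‖Ψ (n - m)‖ * C := (tsum_mul_right).symm
  -- key: G at sample points equals shifted H
  have hGH : ∀ m n : ℤ, G ((m : ℝ) * l - (n : ℝ) * l, L) = H (n - m) := by
    intro m n
    rw [hH]
    have : ((n - m : ℤ) : ℝ) * l = -((m : ℝ) * l - (n : ℝ) * l) := by push_cast; ring
    rw [this, hGsym]
  -- (a)
  have ha : ∀ m : ℤ, F ((m : ℝ) * l) L = E m := by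
    intro m
    rw [hF]
    have step1 : (∑' n : ℤ, I n * G ((m:ℝ) * l - (n:ℝ) * l, L))
        = ∑' n : ℤ, ∑' k : ℤ, E k * Ψ (n - k) * H (n - m) := by
      refine tsum_congr fun n => ?_
      rw [hGH m n, hI n, ← tsum_mul_right]
    rw [step1]
    have hun : Summable (uncurry fun k n : ℤ => E k * Ψ (n - k) * H (n - m)) :=
      shear_summable hE hΨ (fun n => hD (n - m))
    rw [Summable.tsum_comm hun]
    have step2 : ∀ k : ℤ, (∑' n : ℤ, E k * Ψ (n - k) * H (n - m))
        = E k * (if m - k = 0 then 1 else 0) := by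
      intro k
      have : (∑' n : ℤ, Ψ (n - k) * H (n - m)) = if m - k = 0 then 1 else 0 := by
        rw [← hbi (m - k)]
        rw [← (Equiv.addRight k).tsum_eq (fun n => Ψ (n - k) * H (n - m))]
        refine tsum_congr fun n => ?_
        simp only [Equiv.coe_addRight, add_sub_cancel_right]
        congr 2
        ring
      calc (∑' n : ℤ, E k * Ψ (n - k) * H (n - m))
          = ∑' n : ℤ, E k * (Ψ (n - k) * H (n - m)) := tsum_congr fun n => by ring
        _ = E k * ∑' n : ℤ, Ψ (n - k) * H (n - m) := tsum_mul_left
        _ = E k * (if m - k = 0 then 1 else 0) := by rw [this]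
    calc (∑' (k : ℤ) (n : ℤ), E k * Ψ (n - k) * H (n - m))
        = ∑' k : ℤ, E k * (if m - k = 0 then 1 else 0) := tsum_congr step2
      _ = E m := by
          rw [tsum_eq_single m]
          · simp
          · intro k hk
            have : m - k ≠ 0 := sub_ne_zero.2 (Ne.symm hk)
            simp [this]
  -- (4) inner series of (b) converge absolutely
  have h4 : ∀ m : ℤ, Summable fun n : ℤ => ‖Ψ (n - m) * g n‖ := by
    intro m
    apply Summable.of_nonneg_of_le (fun _ => norm_nonneg _)
      (fun n => ?_) ((hΨs m).mul_right C)
    rw [norm_mul]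
    exact mul_le_mul_of_nonneg_left (hC n) (norm_nonneg _)
  -- bound for the inner sums
  have hinb : ∀ m : ℤ, ‖∑' n : ℤ, Ψ (n - m) * g n‖ ≤ (∑' k : ℤ, ‖Ψ k‖) * C := by
    intro m
    refine le_trans (norm_tsum_le_tsum_norm (h4 m)) ?_
    have : (∑' n : ℤ, ‖Ψ (n - m) * g n‖) ≤ ∑' n : ℤ, ‖Ψ (n - m)‖ * C := by
      refine Summable.tsum_le_tsum (fun n => ?_) (h4 m) ((hΨs m).mul_right C)
      rw [norm_mul]
      exact mul_le_mul_of_nonneg_left (hC n) (norm_nonneg _)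
    refine le_trans this (le_of_eq ?_)
    rw [tsum_mul_right]
    congr 1
    exact (Equiv.subRight m).tsum_eq (fun k => ‖Ψ k‖)
  -- (5)
  have h5 : Summable fun m : ℤ =>
      ‖F ((m : ℝ) * l) L * ∑' n : ℤ, Ψ (n - m) * g n‖ := by
    apply Summable.of_nonneg_of_le (fun _ => norm_nonneg _)
      (fun m => ?_) (hE.mul_right ((∑' k : ℤ, ‖Ψ k‖) * C))
    rw [norm_mul, ha m]
    exact mul_le_mul_of_nonneg_left (hinb m) (norm_nonneg _)
  -- (6) the expansion
  have h6 : F y z = ∑' m : ℤ, F ((m : ℝ) * l) L * ∑' n : ℤ, Ψ (n - m) * g n := by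
    have hun : Summable (uncurry fun m n : ℤ => E m * Ψ (n - m) * g n) :=
      shear_summable hE hΨ hC
    calc F y z = ∑' n : ℤ, I n * g n := hF y z
      _ = ∑' n : ℤ, ∑' m : ℤ, E m * Ψ (n - m) * g n := by
          refine tsum_congr fun n => ?_
          rw [hI n, ← tsum_mul_right]
      _ = ∑' m : ℤ, ∑' n : ℤ, E m * Ψ (n - m) * g n := Summable.tsum_comm hun
      _ = ∑' m : ℤ, E m * ∑' n : ℤ, Ψ (n - m) * g n := by
          refine tsum_congr fun m => ?_
          rw [← tsum_mul_left]
          exact tsum_congr fun n => by ring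
      _ = ∑' m : ℤ, F ((m : ℝ) * l) L * ∑' n : ℤ, Ψ (n - m) * g n := by
          refine tsum_congr fun m => ?_
          rw [ha m]
  exact ⟨h1, h2, ha, h4, h5, h6⟩
end
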